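/- If two utility vectors u and w in ℕ^n have equal total sums and u Lorenz dominates w, then the product Π_i u_i ≥ Π_i w_i. -/

import Mathlib

/-- The utility vector sorted in ascending order. -/
def sortedAsc {n : ℕ} (u : Fin n → ℕ) : List ℕ :=
  Multiset.sort (Multiset.ofList (List.ofFn u)) (· ≤ ·)

/-- `u` Lorenz dominates `w`: every prefix sum of the ascending sort of `u`
is at least the corresponding prefix sum for `w`. -/
def LorenzDom {n : ℕ} (u w : Fin n → ℕ) : Prop :=
  ∀ k ≤ n, ((sortedAsc w).take k).sum ≤ ((sortedAsc u).take k).sum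

/-! Write `a`, `b` for the ascending sorts of `u`, `w`. If some `b i` vanishes there is nothing
to prove. Otherwise all entries are positive, and concavity of `log` gives
`log a i - log b i ≥ (a i - b i) / a i`. The weights `1 / a i` are non-increasing and nonnegative,
so Abel summation against the nonnegative prefix sums of `a - b` gives `∑ (a i - b i) / a i ≥ 0`,
hence `∑ log b i ≤ ∑ log a i`. -/

open Finset

theorem sum_range_mul_nonneg_of_antitoneOn {R : Type*} [Ring R] [PartialOrder R]
    [IsOrderedRing R] {c d : ℕ → R} {n : ℕ} (hc : AntitoneOn c (Set.Iio n))
    (hc_nonneg : ∀ i < n, 0 ≤ c i) (hd : ∀ k ≤ n, 0 ≤ ∑ i ∈ range k, d i) :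
    0 ≤ ∑ i ∈ range n, c i * d i := by
  induction n generalizing c with
  | zero => simp
  | succ n ih =>
    -- lowering every weight by `c n` kills the last one and leaves an antitone nonnegative family
    have hsplit : ∑ i ∈ range (n + 1), c i * d i =
        ∑ i ∈ range n, (c i - c n) * d i + c n * ∑ i ∈ range (n + 1), d i := by
      simp only [sum_range_succ, sub_mul, sum_sub_distrib, mul_add, mul_sum]
      abel
    have hc_ge : ∀ i < n, c n ≤ c i := fun i hi =>
      hc (Set.mem_Iio.2 (by omega)) (Set.mem_Iio.2 (by omega)) hi.le
    rw [hsplit]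
    refine add_nonneg (ih (c := fun i => c i - c n) ?_ ?_ fun k hk => hd k (by omega))
      (mul_nonneg (hc_nonneg n n.lt_succ_self) (hd _ le_rfl))
    · intro i hi j hj hij
      exact sub_le_sub_right (hc (Set.mem_Iio.2 (by simp at hi; omega))
        (Set.mem_Iio.2 (by simp at hj; omega)) hij) _
    · exact fun i hi => sub_nonneg.2 (hc_ge i hi)

theorem Real.inv_mul_sub_le_log_sub_log {x y : ℝ} (hx : 0 < x) (hy : 0 < y) :
    x⁻¹ * (x - y) ≤ Real.log x - Real.log y := by
  have h := Real.one_sub_inv_le_log_of_pos (div_pos hx hy)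
  rwa [Real.log_div hx.ne' hy.ne', inv_div, ← div_self hx.ne', ← sub_div, div_eq_inv_mul] at h

theorem sum_log_le_sum_log_of_sum_range_le {a b : ℕ → ℝ} {n : ℕ} (ha : MonotoneOn a (Set.Iio n))
    (ha_pos : ∀ i < n, 0 < a i) (hb_pos : ∀ i < n, 0 < b i)
    (hab : ∀ k ≤ n, ∑ i ∈ range k, b i ≤ ∑ i ∈ range k, a i) :
    ∑ i ∈ range n, Real.log (b i) ≤ ∑ i ∈ range n, Real.log (a i) := by
  have hinv : AntitoneOn (fun i => (a i)⁻¹) (Set.Iio n) := fun i hi j hj hij =>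
    inv_anti₀ (ha_pos i hi) (ha hi hj hij)
  have habel : 0 ≤ ∑ i ∈ range n, (a i)⁻¹ * (a i - b i) :=
    sum_range_mul_nonneg_of_antitoneOn hinv (fun i hi => inv_nonneg.2 (ha_pos i hi).le)
      fun k hk => by simpa only [sum_sub_distrib, sub_nonneg] using hab k hk
  have htangent : ∑ i ∈ range n, (a i)⁻¹ * (a i - b i) ≤
      ∑ i ∈ range n, (Real.log (a i) - Real.log (b i)) := sum_le_sum fun i hi =>
    Real.inv_mul_sub_le_log_sub_log (ha_pos i (mem_range.1 hi)) (hb_pos i (mem_range.1 hi))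
  rw [sum_sub_distrib] at htangent
  linarith

theorem prod_range_le_prod_range_of_sum_range_le {a b : ℕ → ℝ} {n : ℕ}
    (ha : MonotoneOn a (Set.Iio n)) (hb : ∀ i < n, 0 ≤ b i)
    (hab : ∀ k ≤ n, ∑ i ∈ range k, b i ≤ ∑ i ∈ range k, a i) :
    ∏ i ∈ range n, b i ≤ ∏ i ∈ range n, a i := by
  have ha_ge : ∀ i < n, b 0 ≤ a i := fun i hi => by
    have h1 := hab 1 (by omega)
    rw [sum_range_one, sum_range_one] at h1
    exact h1.trans (ha (Set.mem_Iio.2 (by omega)) hi i.zero_le)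
  by_cases hb_pos : ∀ i < n, 0 < b i
  · have ha_pos : ∀ i < n, 0 < a i := fun i hi => (hb_pos 0 (by omega)).trans_le (ha_ge i hi)
    rw [← Real.log_le_log_iff (prod_pos fun i hi => hb_pos i (mem_range.1 hi))
      (prod_pos fun i hi => ha_pos i (mem_range.1 hi)),
      Real.log_prod fun i hi => (hb_pos i (mem_range.1 hi)).ne',
      Real.log_prod fun i hi => (ha_pos i (mem_range.1 hi)).ne']
    exact sum_log_le_sum_log_of_sum_range_le ha ha_pos hb_pos hab
  · obtain ⟨j, hj, hbj⟩ := not_forall₂.1 hb_pos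
    rw [prod_eq_zero (mem_range.2 hj) (le_antisymm (not_lt.1 hbj) (hb j hj))]
    exact prod_nonneg fun i hi => (hb 0 (by omega)).trans (ha_ge i (mem_range.1 hi))

theorem List.sum_take_eq_sum_range_getD {M : Type*} [AddCommMonoid M] (l : List M) (k : ℕ) :
    (l.take k).sum = ∑ i ∈ Finset.range k, l.getD i 0 := by
  induction k with
  | zero => simp
  | succ k ih =>
    rw [List.take_add_one, List.sum_append, ih, Finset.sum_range_succ, List.getD_eq_getElem?_getD]
    cases l[k]? <;> simp

@[to_additive]
theorem List.prod_eq_prod_range_getD {M : Type*} [CommMonoid M] (l : List M) (d : M) :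
    l.prod = ∏ i ∈ Finset.range l.length, l.getD i d := by
  induction l with
  | nil => simp
  | cons x l ih => simp [Finset.prod_range_succ', ih, mul_comm]

theorem List.SortedLE.monotoneOn_getD {α : Type*} [Preorder α] {l : List α} (hl : l.SortedLE)
    (d : α) : MonotoneOn (l.getD · d) (Set.Iio l.length) := fun i hi j hj hij => by
  dsimp only
  rw [List.getD_eq_getElem _ _ hi, List.getD_eq_getElem _ _ hj]
  exact hl.getElem_le_getElem_of_le hij

section sortedAsc

variable {n : ℕ} (u : Fin n → ℕ)

theorem sortedLE_sortedAsc : (sortedAsc u).SortedLE :=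
  (Multiset.pairwise_sort _ _).sortedLE

theorem length_sortedAsc : (sortedAsc u).length = n := by
  simp [sortedAsc]

theorem prod_sortedAsc : (sortedAsc u).prod = ∏ i, u i := by
  rw [← Multiset.prod_coe, sortedAsc, Multiset.sort_eq, Multiset.prod_coe, List.prod_ofFn]

end sortedAsc

theorem lorenzDom_max_prod_general {n : ℕ} (u w : Fin n → ℕ)
    (hdom : LorenzDom u w) :
    ∏ i, w i ≤ ∏ i, u i := by
  have hmono : MonotoneOn (fun i => ((sortedAsc u).getD i 0 : ℝ)) (Set.Iio n) := by
    intro i hi j hj hij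
    rw [← length_sortedAsc u] at hi hj
    exact Nat.cast_le.2 ((sortedLE_sortedAsc u).monotoneOn_getD 0 hi hj hij)
  have hreal := prod_range_le_prod_range_of_sum_range_le hmono (fun _ _ => Nat.cast_nonneg _)
    (b := fun i => ((sortedAsc w).getD i 0 : ℝ)) fun k hk => by
      have hk := hdom k hk
      rw [List.sum_take_eq_sum_range_getD, List.sum_take_eq_sum_range_getD] at hk
      exact_mod_cast hk
  rw [← prod_sortedAsc u, ← prod_sortedAsc w, List.prod_eq_prod_range_getD _ 0,
    List.prod_eq_prod_range_getD _ 0, length_sortedAsc, length_sortedAsc]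
  exact_mod_cast hreal

theorem lorenzDom_max_prod {n : ℕ} (u w : Fin n → ℕ)
    (hsum : ∑ i, u i = ∑ i, w i) (hdom : LorenzDom u w) :
    ∏ i, w i ≤ ∏ i, u i :=
  lorenzDom_max_prod_general u w hdom
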